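/- Let A be a commutative ring with an ℕ-indexed internal grading, and let Γ be a connective graded A-module. Suppose that for every index set I the canonical comparison map Γ ⊗_A ∏_{i∈I} A → ∏_{i∈I} Γ, sending x ⊗ (aᵢ)ᵢ to (aᵢ • x)ᵢ, is bijective. Then Γ is finite-type as a graded A-module: there exists a finite-type free connective graded A-module F₀ and a surjective degree-preserving A-linear map p : F₀ → Γ whose kernel has finite-type generators. -/

import Mathlib

open scoped TensorProduct

noncomputable section

universe u v w

/-- The canonical comparison map `Γ ⊗[A] (∏ i, M i) → ∏ i, (Γ ⊗[A] M i)`,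
sending `x ⊗ (mᵢ)ᵢ` to `(x ⊗ mᵢ)ᵢ`. -/
def comparisonMap (A : Type u) [CommRing A] (Γ : Type v) [AddCommGroup Γ] [Module A Γ]
    {I : Type w} (M : I → Type*) [∀ i, AddCommGroup (M i)] [∀ i, Module A (M i)] :
    (Γ ⊗[A] (∀ i, M i)) →ₗ[A] ∀ i, Γ ⊗[A] M i :=
  LinearMap.pi fun i => LinearMap.lTensor Γ (LinearMap.proj i)

/-- The canonical comparison map `Γ ⊗[A] (∏ i ∈ I, A) → ∏ i ∈ I, Γ`,
sending `x ⊗ (aᵢ)ᵢ` to `(aᵢ • x)ᵢ`. -/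
def comparisonMapPow (A : Type u) [CommRing A] (Γ : Type v) [AddCommGroup Γ] [Module A Γ]
    (I : Type w) :
    (Γ ⊗[A] (I → A)) →ₗ[A] (I → Γ) :=
  LinearMap.pi fun i =>
    (TensorProduct.rid A Γ).toLinearMap ∘ₗ LinearMap.lTensor Γ (LinearMap.proj i)

/-- `x` is a homogeneous element for the grading `ℳ`. -/
def IsHomogeneous {M : Type v} [AddCommGroup M] (ℳ : ℕ → AddSubgroup M) (x : M) : Prop :=
  ∃ n, x ∈ ℳ n

/-- A graded module has *finite-type generators* if it is generated, as an `A`-module, by a set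
of homogeneous elements having only finitely many elements in each degree. -/
def HasFiniteTypeGenerators (A : Type u) [CommRing A] {M : Type v} [AddCommGroup M] [Module A M]
    (ℳ : ℕ → AddSubgroup M) : Prop :=
  ∃ S : Set M, (∀ s ∈ S, IsHomogeneous ℳ s) ∧ Submodule.span A S = ⊤ ∧
    ∀ n, (S ∩ (ℳ n : Set M)).Finite

/-- A submodule `K` of a graded module has *finite-type generators* (for the grading inherited
from the ambient module) if it is generated, as an `A`-module, by a set of homogeneous elements
of the ambient module, lying in `K`, with only finitely many elements in each degree. -/
def SubmoduleHasFiniteTypeGenerators (A : Type u) [CommRing A] {M : Type v} [AddCommGroup M]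
    [Module A M] (ℳ : ℕ → AddSubgroup M) (K : Submodule A M) : Prop :=
  ∃ S : Set M, S ⊆ (K : Set M) ∧ (∀ s ∈ S, IsHomogeneous ℳ s) ∧ Submodule.span A S = K ∧
    ∀ n, (S ∩ (ℳ n : Set M)).Finite

/-- A graded module is *finite-type free* if it admits a basis of homogeneous elements with
only finitely many basis elements in each degree. -/
def IsFiniteTypeFree (A : Type u) [CommRing A] {F : Type v} [AddCommGroup F] [Module A F]
    (ℱ : ℕ → AddSubgroup F) : Prop :=
  ∃ (J : Type v) (b : Module.Basis J A F) (d : J → ℕ),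
    (∀ j, b j ∈ ℱ (d j)) ∧ ∀ n, {j | d j = n}.Finite

/-- The degree-`n` component of the connective graded free `A`-module `⨁ j, Σ^{d j} A`,
realized concretely on `J →₀ A`: the `j`-th coordinate of a degree-`n` element is a
homogeneous element of `A` of degree `n - d j` (and vanishes if `d j > n`). -/
def gradedFreeSubgroup {A : Type u} [CommRing A] (𝒜 : ℕ → AddSubgroup A) {J : Type w}
    (d : J → ℕ) (n : ℕ) : AddSubgroup (J →₀ A) where
  carrier := {f | ∀ j, f j ∈ 𝒜 (n - d j) ∧ (d j ≤ n ∨ f j = 0)}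
  zero_mem' := by
    intro j
    refine ⟨by simpa using zero_mem (𝒜 (n - d j)), Or.inr (by simp)⟩
  add_mem' := by
    intro a b ha hb j
    refine ⟨by simpa using add_mem (ha j).1 (hb j).1, ?_⟩
    rcases (ha j).2 with h | h
    · exact Or.inl h
    · rcases (hb j).2 with h' | h'
      · exact Or.inl h'
      · exact Or.inr (by simp [h, h'])
  neg_mem' := by
    intro a ha j
    refine ⟨by simpa using neg_mem (ha j).1, ?_⟩
    rcases (ha j).2 with h | h
    · exact Or.inl h
    · exact Or.inr (by simp [h])

/-- A connective graded `A`-module `Γ` is *finite-type* if there is a finite-type free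
connective graded `A`-module `F₀` (concretely realized as `J →₀ A`, with `J` having finitely
many elements in each degree) together with a surjective degree-preserving `A`-linear map
`p : F₀ → Γ` whose kernel has finite-type generators (for the inherited grading). -/
def IsFiniteType (A : Type u) [CommRing A] (𝒜 : ℕ → AddSubgroup A) {Γ : Type v}
    [AddCommGroup Γ] [Module A Γ] (ℳ : ℕ → AddSubgroup Γ) : Prop :=
  ∃ (J : Type) (d : J → ℕ) (p : (J →₀ A) →ₗ[A] Γ),
    (∀ n, {j | d j = n}.Finite) ∧ Function.Surjective p ∧
    (∀ n, ∀ f ∈ gradedFreeSubgroup 𝒜 d n, p f ∈ ℳ n) ∧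
    SubmoduleHasFiniteTypeGenerators A (gradedFreeSubgroup 𝒜 d) (LinearMap.ker p)

/-! The comparison map for `I = Γ` hits the identity, so `Γ` is finitely generated, hence by
finitely many homogeneous elements, which give a degree-preserving surjection `p : A^m → Γ`.
Lifting the inclusion of `K = ker p` through `A^m ⊗ A^K`, injectivity of the comparison map of `Γ`
for `I = K` and right exactness of `- ⊗ A^K` show that the comparison map of `K` for `I = K` also
hits the identity, so `K` is finitely generated. As `p` is graded, the homogeneous components of
these generators lie in `K` and generate it. -/

section Comparison

variable {A : Type u} [CommRing A] {M : Type v} {N : Type w} [AddCommGroup M] [Module A M]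
  [AddCommGroup N] [Module A N]

@[simp]
theorem comparisonMapPow_tmul {I : Type*} (x : M) (a : I → A) :
    comparisonMapPow A M I (x ⊗ₜ a) = fun i => a i • x :=
  rfl

theorem comparisonMapPow_comp_rTensor (I : Type*) (φ : M →ₗ[A] N) :
    comparisonMapPow A N I ∘ₗ φ.rTensor (I → A) =
      φ.compLeft I ∘ₗ comparisonMapPow A M I := by
  ext x a i
  simp

theorem Module.Finite.of_id_mem_range_comparisonMapPow
    (h : id ∈ LinearMap.range (comparisonMapPow A M M)) : Module.Finite A M := by
  classical
  obtain ⟨t, ht⟩ := h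
  obtain ⟨S, rfl⟩ := TensorProduct.exists_finset t
  refine ⟨⟨S.image Prod.fst, eq_top_iff.mpr fun x _ => ?_⟩⟩
  have hx : ∑ s ∈ S, s.2 x • s.1 = x := by
    simpa using congrFun ht x
  rw [← hx]
  exact Submodule.sum_mem _ fun s hs =>
    Submodule.smul_mem _ _ (Submodule.subset_span (by simpa using ⟨s.2, hs⟩))

theorem comparisonMapPow_pi_surjective (ι I : Type*) [Fintype ι] :
    Function.Surjective (comparisonMapPow A (ι → A) I) := by
  classical
  intro g
  refine ⟨∑ k, Pi.single k 1 ⊗ₜ fun i => g i k, ?_⟩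
  ext i j
  simp [Pi.single_apply]

theorem comparisonMapPow_surjective [Module.Finite A M] (I : Type*) :
    Function.Surjective (comparisonMapPow A M I) := by
  classical
  obtain ⟨n, π, hπ⟩ := Module.Finite.exists_fin' A M
  intro g
  choose g' hg' using fun i => hπ (g i)
  obtain ⟨t, ht⟩ := comparisonMapPow_pi_surjective (A := A) (Fin n) I g'
  refine ⟨π.rTensor (I → A) t, ?_⟩
  rw [← LinearMap.comp_apply, comparisonMapPow_comp_rTensor, LinearMap.comp_apply, ht]
  exact funext hg'

/-- The inclusion of `K = ker p` lifts through `M ⊗ (K → A)`; injectivity for `N` puts the lift in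
the kernel of `p ⊗ (K → A)`, and right exactness of `- ⊗ (K → A)` moves it into `K ⊗ (K → A)`. -/
theorem Submodule.fg_ker_of_comparisonMapPow_injective [Module.Finite A M] {p : M →ₗ[A] N}
    (hp : Function.Surjective p)
    (hinj : Function.Injective (comparisonMapPow A N (LinearMap.ker p))) :
    (LinearMap.ker p).FG := by
  set K := LinearMap.ker p
  obtain ⟨t, ht⟩ := comparisonMapPow_surjective (A := A) K (fun k : K => (k : M))
  have hpt : p.rTensor (K → A) t = 0 := hinj <| by
    rw [map_zero, ← LinearMap.comp_apply, comparisonMapPow_comp_rTensor, LinearMap.comp_apply, ht]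
    exact funext fun k => k.2
  obtain ⟨s, hs⟩ := (rTensor_exact (K → A) (LinearMap.exact_subtype_ker_map p) hp t).mp hpt
  have hsid : comparisonMapPow A K K s = id := by
    have := LinearMap.congr_fun (comparisonMapPow_comp_rTensor K K.subtype) s
    rw [LinearMap.comp_apply, LinearMap.comp_apply, hs, ht] at this
    exact funext fun k => Subtype.val_injective (congrFun this k).symm
  rw [← Module.Finite.iff_fg]
  exact Module.Finite.of_id_mem_range_comparisonMapPow ⟨s, hsid⟩

end Comparison

section Graded

open DirectSum

variable {A : Type u} [CommRing A] {M : Type v} {N : Type w} [AddCommGroup M] [Module A M]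
  [AddCommGroup N] [Module A N]

theorem decompose_map_coeAddMonoidHom {ℱ : ℕ → AddSubgroup M} (ℳ : ℕ → AddSubgroup N)
    [Decomposition ℳ] {p : M →+ N} (hp : ∀ n, ∀ x ∈ ℱ n, p x ∈ ℳ n) (c : ⨁ n, ℱ n) (n : ℕ) :
    (decompose ℳ (p (DirectSum.coeAddMonoidHom ℱ c)) n : N) = p (c n) := by
  induction c using DirectSum.induction_on with
  | zero => simp
  | of i x =>
    rw [coeAddMonoidHom_of]
    by_cases hin : i = n
    · subst hin
      rw [decompose_of_mem_same ℳ (hp i x x.2), of_eq_same]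
    · rw [decompose_of_mem_ne ℳ (hp i x x.2) hin, of_eq_of_ne _ _ _ (Ne.symm hin),
        ZeroMemClass.coe_zero, map_zero]
  | add c c' hc hc' => simp [hc, hc']

theorem mem_ker_of_coeAddMonoidHom_mem_ker {ℱ : ℕ → AddSubgroup M} (ℳ : ℕ → AddSubgroup N)
    [Decomposition ℳ] {p : M →ₗ[A] N} (hp : ∀ n, ∀ x ∈ ℱ n, p x ∈ ℳ n) {c : ⨁ n, ℱ n}
    (hc : DirectSum.coeAddMonoidHom ℱ c ∈ LinearMap.ker p) (n : ℕ) :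
    (c n : M) ∈ LinearMap.ker p := by
  rw [LinearMap.mem_ker, ← p.toAddMonoidHom_coe, ← decompose_map_coeAddMonoidHom ℳ hp,
    LinearMap.toAddMonoidHom_coe, LinearMap.mem_ker.mp hc, decompose_zero, DirectSum.zero_apply,
    ZeroMemClass.coe_zero]

theorem exists_finite_homogeneous_span_eq (ℱ : ℕ → AddSubgroup M)
    (hℱ : Function.Surjective (DirectSum.coeAddMonoidHom ℱ)) {K : Submodule A M} (hK : K.FG)
    (hKℱ : ∀ c : ⨁ n, ℱ n, DirectSum.coeAddMonoidHom ℱ c ∈ K → ∀ n, (c n : M) ∈ K) :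
    ∃ S : Set M, S.Finite ∧ S ⊆ K ∧ (∀ s ∈ S, IsHomogeneous ℱ s) ∧ Submodule.span A S = K := by
  classical
  obtain ⟨W, rfl⟩ := hK
  choose c hc using hℱ
  set S := ⋃ w ∈ W, (fun n => (c w n : M)) '' (c w).support
  have hSK : S ⊆ Submodule.span A (W : Set M) := by
    simp only [S, Set.iUnion_subset_iff, Set.image_subset_iff]
    exact fun w hw n _ => hKℱ (c w) ((hc w).symm ▸ Submodule.subset_span hw) n
  refine ⟨S, W.finite_toSet.biUnion fun w _ => (c w).support.finite_toSet.image _, hSK, ?_,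
    le_antisymm (Submodule.span_le.mpr hSK) (Submodule.span_le.mpr fun w hw => ?_)⟩
  · simp only [S, Set.mem_iUnion, Set.mem_image]
    rintro _ ⟨w, -, n, -, rfl⟩
    exact ⟨n, (c w n).2⟩
  · rw [SetLike.mem_coe, ← hc w, coeAddMonoidHom_eq_dfinsuppSum]
    exact Submodule.sum_mem _ fun n hn => Submodule.subset_span <|
      Set.mem_biUnion hw (Set.mem_image_of_mem _ hn)

end Graded

section GradedFree

open DirectSum

variable {A : Type u} [CommRing A] (𝒜 : ℕ → AddSubgroup A) {J : Type w} (d : J → ℕ)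

theorem mem_gradedFreeSubgroup {n : ℕ} {f : J →₀ A} :
    f ∈ gradedFreeSubgroup 𝒜 d n ↔ ∀ j, f j ∈ 𝒜 (n - d j) ∧ (d j ≤ n ∨ f j = 0) :=
  Iff.rfl

theorem single_mem_gradedFreeSubgroup {k : ℕ} {a : A} (ha : a ∈ 𝒜 k) (j : J) :
    Finsupp.single j a ∈ gradedFreeSubgroup 𝒜 d (k + d j) := by
  classical
  refine (mem_gradedFreeSubgroup 𝒜 d).mpr fun j' => ?_
  by_cases hj : j = j'
  · subst hj
    simp [ha]
  · rw [Finsupp.single_eq_of_ne (Ne.symm hj)]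
    exact ⟨zero_mem _, Or.inr rfl⟩

theorem coeAddMonoidHom_gradedFreeSubgroup_surjective [Decomposition 𝒜] :
    Function.Surjective (DirectSum.coeAddMonoidHom (gradedFreeSubgroup 𝒜 d)) := by
  classical
  rw [← AddMonoidHom.mrange_eq_top, eq_top_iff]
  rintro f -
  rw [← f.sum_single, Finsupp.sum]
  refine AddSubmonoid.sum_mem _ fun j _ => ?_
  rw [← sum_support_decompose 𝒜 (f j), Finsupp.single_finsetSum]
  exact AddSubmonoid.sum_mem _ fun k _ =>
    ⟨of _ (k + d j) ⟨_, single_mem_gradedFreeSubgroup 𝒜 d (decompose 𝒜 (f j) k).2 j⟩,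
      coeAddMonoidHom_of _ _ _⟩

theorem linearCombination_mem_of_mem_gradedFreeSubgroup {Γ : Type v} [AddCommGroup Γ]
    [Module A Γ] (ℳ : ℕ → AddSubgroup Γ) [SetLike.GradedSMul 𝒜 ℳ] {v : J → Γ}
    (hv : ∀ j, v j ∈ ℳ (d j)) {n : ℕ} {f : J →₀ A} (hf : f ∈ gradedFreeSubgroup 𝒜 d n) :
    Finsupp.linearCombination A v f ∈ ℳ n := by
  rw [Finsupp.linearCombination_apply, Finsupp.sum]
  refine AddSubgroup.sum_mem _ fun j _ => ?_
  rcases (hf j).2 with hdj | hfj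
  · simpa [Nat.sub_add_cancel hdj] using SetLike.GradedSMul.smul_mem (hf j).1 (hv j)
  · simp [hfj, zero_mem]

end GradedFree

theorem exists_linearCombination_surjective_of_finite {A : Type u} [CommRing A] {M : Type v}
    [AddCommGroup M] [Module A M] (ℳ : ℕ → AddSubgroup M) {S : Set M} (hS : S.Finite)
    (hhom : ∀ s ∈ S, IsHomogeneous ℳ s) (hspan : Submodule.span A S = ⊤) :
    ∃ (m : ℕ) (d : Fin m → ℕ) (v : Fin m → M),
      (∀ j, v j ∈ ℳ (d j)) ∧ Function.Surjective (Finsupp.linearCombination A v) := by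
  obtain ⟨m, v, -, rfl⟩ := hS.fin_param
  choose d hd using fun j => hhom (v j) (Set.mem_range_self j)
  refine ⟨m, d, v, hd, ?_⟩
  rw [← LinearMap.range_eq_top, Finsupp.range_linearCombination, hspan]

/-- If `Γ` is a connective graded module over the connective graded commutative
ring `A` such that for every index set `I` the canonical comparison map
`Γ ⊗[A] ∏ᵢ A → ∏ᵢ Γ`, `x ⊗ (aᵢ)ᵢ ↦ (aᵢ • x)ᵢ`, is bijective, then `Γ` is finite-type: there
is a finite-type free connective graded `A`-module `F₀` and a surjective degree-preserving
`A`-linear map `p : F₀ → Γ` whose kernel has finite-type generators. -/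
theorem isFiniteType_of_comparisonMapPow_bijective
    {A : Type u} [CommRing A] (𝒜 : ℕ → AddSubgroup A) [GradedRing 𝒜]
    {Γ : Type u} [AddCommGroup Γ] [Module A Γ] (ℳ : ℕ → AddSubgroup Γ)
    [DirectSum.Decomposition ℳ] [SetLike.GradedSMul 𝒜 ℳ]
    (h : ∀ (I : Type u), Function.Bijective (comparisonMapPow A Γ I)) :
    IsFiniteType A 𝒜 ℳ := by
  have : Module.Finite A Γ :=
    Module.Finite.of_id_mem_range_comparisonMapPow ((h Γ).2 id)
  obtain ⟨S, hSfin, -, hShom, hSspan⟩ := exists_finite_homogeneous_span_eq (A := A) ℳ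
    (DirectSum.Decomposition.isInternal ℳ).2 Module.Finite.fg_top (fun _ _ _ => trivial)
  obtain ⟨m, d, v, hv, hp⟩ := exists_linearCombination_surjective_of_finite ℳ hSfin hShom hSspan
  set p := Finsupp.linearCombination A v
  have hp_graded : ∀ n, ∀ f ∈ gradedFreeSubgroup 𝒜 d n, p f ∈ ℳ n := fun _ _ =>
    linearCombination_mem_of_mem_gradedFreeSubgroup 𝒜 d ℳ hv
  obtain ⟨T, hTfin, hTK, hThom, hTspan⟩ := exists_finite_homogeneous_span_eq
    (gradedFreeSubgroup 𝒜 d) (coeAddMonoidHom_gradedFreeSubgroup_surjective 𝒜 d)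
    (Submodule.fg_ker_of_comparisonMapPow_injective hp (h _).1)
    fun _ => mem_ker_of_coeAddMonoidHom_mem_ker ℳ hp_graded
  exact ⟨Fin m, d, p, fun _ => Set.toFinite _, hp, hp_graded,
    T, hTK, hThom, hTspan, fun _ => hTfin.subset Set.inter_subset_left⟩
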